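/- arXiv:1711.06018 — 2 statements merged into one kernel-verified Lean document; each statement's English description precedes it below -/
import Mathlib

section
/- Let λ(t) = exp(-t^{-r}) for t > 0 (with λ(0)=0) and r > 0, and Λ(t) = ∫_0^t λ(s) ds. Then for all t ∈ (0, T] with T small enough, λ(t)/Λ(t) ≥ λ'(t)/λ(t), i.e., the quotient (λ'(t)/λ(t)) / (λ(t)/Λ(t)) is bounded: there exists c > 0 such that λ'(t)/λ(t) ≤ c λ(t)/Λ(t) on (0,T]. -/
/-!
The majorant `G(t) = t^(r+1) λ(t) / r` vanishes as `t → 0⁺` and has derivative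
`(1 + (r+1) t^r / r) λ(t) ≥ λ(t)`, so `Λ(t) ≤ G(t)`. Since `λ'(t)/λ(t) = r t^(-r-1) = λ(t)/G(t)`,
the inequality holds with `c = 1` on every interval `(0, T]`.
-/

open Set Real Filter Topology

noncomputable def expShape (r t : ℝ) : ℝ := if t ≤ 0 then 0 else exp (-t ^ (-r))

namespace expShape

variable {r t : ℝ}

theorem of_nonpos (ht : t ≤ 0) : expShape r t = 0 := if_pos ht

theorem of_pos (ht : 0 < t) : expShape r t = exp (-t ^ (-r)) := if_neg ht.not_ge

theorem nonneg (r t : ℝ) : 0 ≤ expShape r t := by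
  unfold expShape; split_ifs <;> positivity

theorem le_one (r t : ℝ) : expShape r t ≤ 1 := by
  rcases le_or_gt t 0 with ht | ht
  · simp [of_nonpos ht]
  · rw [of_pos ht, exp_le_one_iff, neg_nonpos]
    exact rpow_nonneg ht.le _

theorem pos (ht : 0 < t) : 0 < expShape r t := by
  rw [of_pos ht]; positivity

theorem monotone (hr : 0 ≤ r) : Monotone (expShape r) := by
  intro x y hxy
  rcases le_or_gt x 0 with hx | hx
  · rw [of_nonpos hx]; exact nonneg r y
  · rw [of_pos hx, of_pos (hx.trans_le hxy), exp_le_exp, neg_le_neg_iff]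
    exact rpow_le_rpow_of_nonpos hx hxy (neg_nonpos.mpr hr)

theorem hasDerivAt (ht : 0 < t) :
    HasDerivAt (expShape r) (r * t ^ (-r - 1) * expShape r t) t := by
  have hpow : HasDerivAt (fun x : ℝ => -x ^ (-r)) (r * t ^ (-r - 1)) t :=
    (hasDerivAt_rpow_const (Or.inl ht.ne')).neg.congr_deriv (by ring)
  have hexp := (hasDerivAt_exp _).comp t hpow
  rw [of_pos ht, mul_comm]
  refine hexp.congr_of_eventuallyEq ?_
  filter_upwards [lt_mem_nhds ht] with x hx using of_pos hx

theorem deriv_div_self (ht : 0 < t) : deriv (expShape r) t / expShape r t = r * t ^ (-r - 1) := by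
  rw [(hasDerivAt ht).deriv, mul_div_cancel_right₀ _ (pos ht).ne']

theorem hasDerivAt_majorant (hr : r ≠ 0) (ht : 0 < t) :
    HasDerivAt (fun s => s ^ (r + 1) * expShape r s / r)
      (((r + 1) * t ^ r / r + 1) * expShape r t) t := by
  have hpow : HasDerivAt (fun s : ℝ => s ^ (r + 1)) ((r + 1) * t ^ r) t := by
    simpa using hasDerivAt_rpow_const (p := r + 1) (Or.inl ht.ne')
  refine ((hpow.mul (hasDerivAt ht)).div_const r).congr_deriv ?_
  have hcancel : t ^ (r + 1) * t ^ (-r - 1) = 1 := by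
    rw [← rpow_add ht]; norm_num
  field_simp
  linear_combination r * expShape r t * hcancel

theorem tendsto_majorant (hr : 0 < r) :
    Tendsto (fun s => s ^ (r + 1) * expShape r s / r) (𝓝[≥] 0) (𝓝 0) := by
  have hlim : Tendsto (fun s : ℝ => s ^ (r + 1) / r) (𝓝[≥] 0) (𝓝 0) := by
    have := ((continuousAt_rpow_const 0 (r + 1) (Or.inr (by linarith))).div_const r).tendsto
    rw [zero_rpow (by linarith), zero_div] at this
    exact this.mono_left nhdsWithin_le_nhds
  refine tendsto_of_tendsto_of_tendsto_of_le_of_le' tendsto_const_nhds hlim ?_ ?_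
  all_goals filter_upwards [self_mem_nhdsWithin] with s (hs : 0 ≤ s)
  · have := rpow_nonneg hs (r + 1); have := nonneg r s; positivity
  · gcongr
    exact mul_le_of_le_one_right (rpow_nonneg hs _) (le_one r s)

theorem integral_le (hr : 0 < r) (ht : 0 < t) :
    ∫ s in (0:ℝ)..t, expShape r s ≤ t ^ (r + 1) * expShape r t / r := by
  have hG0 : (0:ℝ) ^ (r + 1) * expShape r 0 / r = 0 := by simp [of_nonpos le_rfl]
  have hcont : ContinuousOn (fun s => s ^ (r + 1) * expShape r s / r) (Icc 0 t) := by
    intro x hx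
    rcases hx.1.eq_or_lt with rfl | hx0
    · rw [ContinuousWithinAt, hG0]
      exact (tendsto_majorant hr).mono_left (nhdsWithin_mono _ Icc_subset_Ici_self)
    · exact (hasDerivAt_majorant hr.ne' hx0).continuousAt.continuousWithinAt
  have := intervalIntegral.integral_le_sub_of_hasDeriv_right_of_le ht.le hcont
    (fun x hx => (hasDerivAt_majorant hr.ne' hx.1).hasDerivWithinAt)
    ((monotone hr.le).locallyIntegrable.integrableOn_isCompact isCompact_Icc) ?_
  · simpa [hG0] using this
  · intro x hx
    have : 0 ≤ (r + 1) * x ^ r / r := by have := rpow_nonneg hx.1.le r; positivity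
    nlinarith [nonneg r x]

end expShape

/-- For `λ(t) = exp(-t^{-r})` (with `λ(0) = 0`) and `r > 0`, there exist `c > 0` and `T > 0`
such that `λ'(t)/λ(t) ≤ c λ(t)/Λ(t)` for all `t ∈ (0,T]`, where `Λ(t) = ∫₀ᵗ λ`. -/
theorem exp_shape_function_upper_bound (r : ℝ) (hr : 0 < r) :
    let lam : ℝ → ℝ := fun t => if t ≤ 0 then 0 else Real.exp (-t ^ (-r))
    ∃ c > (0:ℝ), ∃ T > (0:ℝ), ∀ t ∈ Ioc 0 T,
      deriv lam t / lam t ≤ c * (lam t / ∫ s in (0:ℝ)..t, lam s) := by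
  show ∃ c > (0:ℝ), ∃ T > (0:ℝ), ∀ t ∈ Ioc 0 T, deriv (expShape r) t / expShape r t ≤
    c * (expShape r t / ∫ s in (0:ℝ)..t, expShape r s)
  refine ⟨1, one_pos, 1, one_pos, fun t ⟨ht, _⟩ => ?_⟩
  have hΛ : 0 < ∫ s in (0:ℝ)..t, expShape r s :=
    intervalIntegral.intervalIntegral_pos_of_pos_on (expShape.monotone hr.le).intervalIntegrable
      (fun x hx => expShape.pos hx.1) ht
  have hmajorant : r * t ^ (-r - 1) = expShape r t / (t ^ (r + 1) * expShape r t / r) := by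
    rw [show -r - 1 = -(r + 1) by ring, rpow_neg ht.le]
    field_simp [(expShape.pos (r := r) ht).ne', (rpow_pos_of_pos ht (r + 1)).ne']
  rw [expShape.deriv_div_self ht, one_mul, hmajorant]
  exact div_le_div_of_nonneg_left (expShape.nonneg r t) hΛ (expShape.integral_le hr ht)
end

section
/- Define ρ(t,ξ) ≥ 1 by ρ(t,ξ)^m = 1 + ⟨ξ⟩ λ(t)^m (w(Λ(t)))^{m(m-1)}, where λ is a shape function with λ'(t) ≥ c₀ λ(t)²/Λ(t) for c₀ > (m-1)/m, and w satisfies 0 < -∂_t(w(Λ(t))) ≤ (λ(t)/Λ(t)) w(Λ(t))/m. Then ∂_t ρ(t,ξ) ≥ 0 for all t ∈ (0,T] and ξ ∈ ℝⁿ. -/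
open Set Real

/-- Let `ρ(t,ξ) = (1 + ⟨ξ⟩ λ(t)^m (w(Λ(t)))^{m(m-1)})^{1/m}` where `λ` is a shape function
with `λ'(t) ≥ c₀ λ(t)²/Λ(t)`, `c₀ > (m-1)/m`, and `W(t) = w(Λ(t)) > 0` satisfies
`0 < -∂_t W(t) ≤ (1/m)(λ(t)/Λ(t)) W(t)`. Then `∂_t ρ(t,ξ) ≥ 0` on `(0,T] × ℝⁿ`. -/
theorem rho_monotone
    (n : ℕ) (T c₀ : ℝ) (m : ℕ) (hT : 0 < T) (hm : 1 ≤ m)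
    (hc₀ : ((m : ℝ) - 1) / m < c₀)
    (l W L : ℝ → ℝ)
    (hl : ContDiffOn ℝ (⊤ : ℕ∞) l (Icc 0 T))
    (hlpos : ∀ t ∈ Ioc 0 T, 0 < l t)
    (hL : ∀ t, L t = ∫ r in (0:ℝ)..t, l r)
    (hLpos : ∀ t ∈ Ioc 0 T, 0 < L t)
    (hshape : ∀ t ∈ Ioc 0 T, c₀ * (l t) ^ 2 / L t ≤ deriv l t)
    (hWpos : ∀ t ∈ Ioc 0 T, 0 < W t)
    (hWdiff : DifferentiableOn ℝ W (Ioc 0 T))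
    (hWder : ∀ t ∈ Ioc 0 T,
      0 < -deriv W t ∧ -deriv W t ≤ (1 / m) * (l t / L t) * W t) :
    ∀ t ∈ Ioc 0 T, ∀ ξ : EuclideanSpace ℝ (Fin n),
      0 ≤ deriv (fun u => (1 + Real.sqrt (1 + ‖ξ‖ ^ 2) * l u ^ (m : ℕ) *
            W u ^ (m * (m - 1) : ℕ)) ^ ((1 : ℝ) / m)) t := by
  intro t ht ξ
  have hmR : (0 : ℝ) < m := by exact_mod_cast Nat.pos_of_ne_zero (by omega)
  have hc₀pos : 0 < c₀ := lt_of_le_of_lt (div_nonneg (by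
    have : (1 : ℝ) ≤ m := by exact_mod_cast hm
    linarith) hmR.le) hc₀
  have hlt := hlpos t ht
  have hLt := hLpos t ht
  have hWt := hWpos t ht
  have hld := hshape t ht
  obtain ⟨hWd1, hWd2⟩ := hWder t ht
  -- differentiability of l at t (forced by hshape)
  have hdl : DifferentiableAt ℝ l t := by
    by_contra h
    have h0 := deriv_zero_of_not_differentiableAt h
    rw [h0] at hld
    have : 0 < c₀ * l t ^ 2 / L t := by positivity
    linarith
  -- differentiability of W at t (forced by hWder)
  have hdW : DifferentiableAt ℝ W t := by
    by_contra h
    have h0 := deriv_zero_of_not_differentiableAt h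
    rw [h0] at hWd1
    simp at hWd1
  set a : ℝ := Real.sqrt (1 + ‖ξ‖ ^ 2) with ha
  have hapos : 0 < a := Real.sqrt_pos.mpr (by positivity)
  set M : ℕ := m * (m - 1) with hM
  have h1 : HasDerivAt (fun u => l u ^ m) ((m : ℝ) * l t ^ (m - 1) * deriv l t) t :=
    hdl.hasDerivAt.pow m
  have h2 : HasDerivAt (fun u => W u ^ M) ((M : ℝ) * W t ^ (M - 1) * deriv W t) t :=
    hdW.hasDerivAt.pow M
  have h3 := (((h1.const_mul a).mul h2)).const_add 1
  have hfpos : 0 < 1 + a * l t ^ m * W t ^ M := by positivity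
  have h4 := h3.rpow_const (p := (1 : ℝ) / m) (Or.inl (ne_of_gt hfpos))
  simp only [Pi.mul_apply] at h4
  rw [h4.deriv]
  -- key inequality: the inner derivative is nonnegative
  have hkey : 0 ≤ (m : ℝ) * l t ^ (m - 1) * deriv l t * W t ^ M +
      l t ^ m * ((M : ℝ) * W t ^ (M - 1) * deriv W t) := by
    rcases eq_or_lt_of_le hm with h1m | h2m
    · -- m = 1
      have : m = 1 := h1m.symm
      subst this
      simp only [hM]
      norm_num
      calc (0:ℝ) ≤ c₀ * l t ^ 2 / L t := by positivity
        _ ≤ deriv l t := hld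
    · -- m ≥ 2
      have hm2 : 2 ≤ m := h2m
      have hM1 : 1 ≤ M := by
        simp only [hM]; exact Nat.one_le_iff_ne_zero.mpr (by
          intro h; rcases Nat.mul_eq_zero.mp h with h | h <;> omega)
      have hlpow : l t ^ m = l t ^ (m - 1) * l t := by
        rw [← pow_succ]; congr 1; omega
      have hWpow : W t ^ M = W t ^ (M - 1) * W t := by
        rw [← pow_succ]; congr 1; omega
      have hMcast : (M : ℝ) = (m : ℝ) * ((m : ℝ) - 1) := by
        simp only [hM]
        push_cast [Nat.cast_sub hm]
        ring
      rw [hlpow, hWpow]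
      have hS : 0 < l t ^ (m - 1) * W t ^ (M - 1) := by positivity
      have hexpand : (m : ℝ) * l t ^ (m - 1) * deriv l t * (W t ^ (M - 1) * W t) +
          l t ^ (m - 1) * l t * ((M : ℝ) * W t ^ (M - 1) * deriv W t) =
          (l t ^ (m - 1) * W t ^ (M - 1)) *
            ((m : ℝ) * deriv l t * W t + (M : ℝ) * l t * deriv W t) := by ring
      rw [hexpand]
      apply mul_nonneg hS.le
      -- need 0 ≤ m * l' * W + M * l * W'
      have hld' : c₀ * l t ^ 2 ≤ L t * deriv l t := by
        rw [← div_le_iff₀' hLt] at *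
        linarith [hld]
      have hwd' : -(l t * W t) ≤ (m : ℝ) * L t * deriv W t := by
        have h := hWd2
        have : (1 / (m : ℝ)) * (l t / L t) * W t * ((m : ℝ) * L t) = l t * W t := by
          field_simp
        nlinarith [mul_le_mul_of_nonneg_right h (by positivity : (0:ℝ) ≤ (m : ℝ) * L t)]
      have hm2R : (2:ℝ) ≤ (m:ℝ) := by exact_mod_cast hm2
      have hcm : (m : ℝ) - 1 < (m : ℝ) * c₀ := by
        rw [div_lt_iff₀ hmR] at hc₀
        linarith
      rw [hMcast]
      have hfinal : 0 ≤ (m : ℝ) * L t * ((m : ℝ) * deriv l t * W t +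
          (m : ℝ) * ((m : ℝ) - 1) * l t * deriv W t) := by
        nlinarith [mul_le_mul_of_nonneg_left hld' (mul_nonneg hmR.le hWt.le),
          mul_le_mul_of_nonneg_left hwd'
            (mul_nonneg (by linarith [hm2R] : (0:ℝ) ≤ (m:ℝ) - 1) hlt.le),
          mul_pos (mul_pos hmR (mul_pos (by positivity : (0:ℝ) < l t ^ 2) hWt))
            (sub_pos.mpr hcm)]
      have hmL : 0 < (m:ℝ) * L t := mul_pos hmR hLt
      have h0 : (m:ℝ) * L t * 0 ≤ (m:ℝ) * L t * ((m : ℝ) * deriv l t * W t +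
          (m : ℝ) * ((m : ℝ) - 1) * l t * deriv W t) := by linarith [hfinal]
      exact le_of_mul_le_mul_left h0 hmL
  have hp : (0 : ℝ) ≤ 1 / m := by positivity
  have hr : (0 : ℝ) < (1 + a * l t ^ m * W t ^ M) ^ ((1 : ℝ) / m - 1) :=
    Real.rpow_pos_of_pos hfpos _
  have hF : 0 ≤ a * ((m : ℝ) * l t ^ (m - 1) * deriv l t) * W t ^ M +
      a * l t ^ m * ((M : ℝ) * W t ^ (M - 1) * deriv W t) := by nlinarith [hkey]
  positivity
end
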